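/- Let f̃ ∈ H^r_⋄(∂D) with r ∈ ℕ, and let z̃_m = e^{2πim/M}, m = 0,…,M−1, be equidistant points on the unit circle. If the point masses f̃_M := (2π/M) Σ_m f̃(z̃_m) δ_{z̃_m} satisfy Σ_m f̃(z̃_m) = 0, then ‖f̃_M − f̃‖_{H^{-r}(∂D)} ≤ C M^{-r} ‖f̃‖_{H^r(∂D)}, with C = C(r) independent of M ≥ 2 and f̃. -/

import Mathlib

/-!
With `h = 2π/M`, the pairing `⟨f̃_M - f̃, v⟩` is the error of the equal-weight rule at the nodes
`m h` applied to the periodic function `g = f v`. Taylor's formula with integral remainder on each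
cell `[m h, (m + 1) h]` writes this error as a combination of the terms `h^j / (j+1)!` times the
errors of the same rule for the derivatives `g^(j)`, `1 ≤ j < r` (whose integrals vanish by
periodicity), plus a remainder bounded by `h^r / r! ∫ |g^(r)|`. Strong induction on `r` gives an
error `O(h^r ∫ |g^(r)|)`, and Leibniz's rule with Cauchy–Schwarz bounds `∫ |(f v)^(r)|` by
`2^r ‖f‖_{H^r} ‖v‖_{H^r}`.
-/

open MeasureTheory

/-- The Sobolev norm of order `r` of a (2π-periodic) function on the circle:
`‖f‖_{H^r} = (Σ_{j=0}^{r} ‖f^{(j)}‖²_{L²(0,2π)})^{1/2}`. -/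
noncomputable def Hnorm (r : ℕ) (f : ℝ → ℂ) : ℝ :=
  (∑ j ∈ Finset.range (r + 1),
    ∫ s in (0 : ℝ)..(2 * Real.pi), ‖iteratedDeriv j f s‖ ^ 2) ^ ((1 : ℝ) / 2)

open intervalIntegral Finset Function Nat Real

variable {E : Type*} [NormedAddCommGroup E] [NormedSpace ℝ E]

theorem Function.Periodic.iteratedDeriv {g : ℝ → E} {T : ℝ} (hg : Periodic g T) (n : ℕ) :
    Periodic (_root_.iteratedDeriv n g) T := by
  induction n with
  | zero => simpa
  | succ n ih => intro s; rw [iteratedDeriv_succ, ← deriv_comp_add_const, ih.funext]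

theorem ContDiff.iteratedDeriv_of_le {𝕜 F : Type*} [NontriviallyNormedField 𝕜]
    [NormedAddCommGroup F] [NormedSpace 𝕜 F] {g : 𝕜 → F} {k j : ℕ} (hg : ContDiff 𝕜 k g)
    (hj : j ≤ k) : ContDiff 𝕜 (k - j : ℕ) (_root_.iteratedDeriv j g) := by
  rw [iteratedDeriv_eq_iterate]
  exact ContDiff.iterate_deriv' (k - j) j (by rwa [Nat.sub_add_cancel hj])

theorem iteratedDeriv_iteratedDeriv {𝕜 F : Type*} [NontriviallyNormedField 𝕜]
    [NormedAddCommGroup F] [NormedSpace 𝕜 F] (m n : ℕ) (g : 𝕜 → F) :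
    iteratedDeriv m (iteratedDeriv n g) = iteratedDeriv (m + n) g := by
  simp only [iteratedDeriv_eq_iterate, iterate_add_apply]

/-- For `T`-periodic `g` the equal-weight rule at the nodes `T m / M` is the composite
trapezoidal rule on `[0, T]`. -/
noncomputable def periodicTrapezoidalError (T : ℝ) (M : ℕ) (g : ℝ → E) : E :=
  (T / M) • ∑ m ∈ range M, g (T * m / M) - ∫ s in 0..T, g s

variable {T : ℝ} {M : ℕ}

theorem sum_integral_equispaced {F : Type*} [NormedAddCommGroup F] [NormedSpace ℝ F]
    {f : ℝ → F} (hf : Continuous f) (hM : M ≠ 0) :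
    ∑ m ∈ range M, ∫ s in T * m / M..T * (m + 1) / M, f s = ∫ s in 0..T, f s := by
  have := sum_integral_adjacent_intervals (μ := volume) (a := fun m : ℕ ↦ T * m / M) (n := M)
    fun _ _ ↦ hf.intervalIntegrable _ _
  push_cast at this
  rwa [mul_zero, zero_div, mul_div_cancel_right₀ _ (cast_ne_zero.mpr hM)] at this

theorem norm_integral_taylor_remainder_le {w : ℝ → E} (hw : Continuous w) {a b : ℝ} (hab : a ≤ b)
    (k : ℕ) :
    ‖∫ s in a..b, ((b - s) ^ k / k !) • w s‖ ≤ (b - a) ^ k / k ! * ∫ s in a..b, ‖w s‖ := by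
  rw [← intervalIntegral.integral_const_mul]
  refine (intervalIntegral.norm_integral_le_integral_norm hab).trans (integral_mono_on hab
    (Continuous.intervalIntegrable (by fun_prop) _ _)
    (Continuous.intervalIntegrable (by fun_prop) _ _) ?_)
  intro s ⟨has, hsb⟩
  rw [norm_smul, Real.norm_of_nonneg (by have := sub_nonneg.mpr hsb; positivity)]
  gcongr

theorem norm_sum_taylor_remainder_le {w : ℝ → E} (hw : Continuous w) (hT : 0 ≤ T) (hM : M ≠ 0)
    (k : ℕ) :
    ‖∑ m ∈ range M, ∫ s in T * m / M..T * (m + 1) / M, ((T * (m + 1) / M - s) ^ k / k !) • w s‖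
      ≤ (T / M) ^ k / k ! * ∫ s in 0..T, ‖w s‖ := by
  have hstep : ∀ m : ℕ, T * (m + 1) / M - T * m / M = T / M := fun m ↦ by ring
  rw [← sum_integral_equispaced hw.norm hM, mul_sum]
  refine (norm_sum_le _ _).trans (sum_le_sum fun m _ ↦ ?_)
  rw [← hstep m]
  exact norm_integral_taylor_remainder_le hw (by gcongr; linarith) k

variable [CompleteSpace E]

theorem Function.Periodic.intervalIntegral_deriv_eq_zero {g : ℝ → E} {T : ℝ} (hg : Periodic g T)
    (hg₁ : ContDiff ℝ 1 g) : ∫ s in 0..T, deriv g s = 0 := by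
  rw [integral_deriv_eq_sub (fun x _ ↦ hg₁.differentiable one_ne_zero x)
    ((hg₁.continuous_deriv le_rfl).intervalIntegrable _ _), hg.eq, sub_self]

theorem Function.Periodic.periodicTrapezoidalError_deriv {g : ℝ → E} (hg : Periodic g T)
    (hg₁ : ContDiff ℝ 1 g) (M : ℕ) :
    periodicTrapezoidalError T M (deriv g) = (T / M) • ∑ m ∈ range M, deriv g (T * m / M) := by
  rw [periodicTrapezoidalError, hg.intervalIntegral_deriv_eq_zero hg₁, sub_zero]

theorem integral_eq_sum_add_integral_iteratedDeriv {g : ℝ → E} {k : ℕ} (hg : ContDiff ℝ k g)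
    (a b : ℝ) :
    ∫ s in a..b, g s =
      ∑ j ∈ range k, ((b - a) ^ (j + 1) / (j + 1)!) • iteratedDeriv j g a +
        ∫ s in a..b, ((b - s) ^ k / k !) • iteratedDeriv k g s := by
  induction k with
  | zero => simp
  | succ k ih =>
    rw [ih (hg.of_le (by norm_cast; omega)), sum_range_succ, add_assoc]
    congr 1
    have hu : ∀ s, HasDerivAt (fun s ↦ -((b - s) ^ (k + 1) / (k + 1)!)) ((b - s) ^ k / k !) s := by
      intro s
      refine ((((hasDerivAt_id s).const_sub b).pow (k + 1)).div_const _).neg.congr_deriv ?_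
      rw [factorial_succ]; push_cast; field_simp; simp
    have hv : ∀ s, HasDerivAt (iteratedDeriv k g) (iteratedDeriv (k + 1) g s) s := fun s ↦ by
      rw [iteratedDeriv_succ]
      exact ((hg.differentiable_iteratedDeriv k (by norm_cast; omega)) s).hasDerivAt
    have hparts := integral_smul_deriv_eq_deriv_smul (a := a) (b := b) (fun s _ ↦ hu s)
      (fun s _ ↦ hv s) ((by fun_prop : Continuous fun s ↦ (b - s) ^ k / k !).intervalIntegrable _ _)
      ((hg.continuous_iteratedDeriv _ le_rfl).intervalIntegrable _ _)
    simp only [sub_self, zero_pow (succ_ne_zero k), zero_div, neg_zero, zero_smul, zero_sub,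
      neg_smul, intervalIntegral.integral_neg] at hparts
    linear_combination (norm := module) hparts

theorem integral_eq_sum_iteratedDeriv_nodes_add_remainder {g : ℝ → E} {k : ℕ}
    (hg : ContDiff ℝ k g) (hM : M ≠ 0) :
    ∫ s in 0..T, g s =
      ∑ j ∈ range k, ((T / M) ^ (j + 1) / (j + 1)!) •
          ∑ m ∈ range M, iteratedDeriv j g (T * m / M) +
        ∑ m ∈ range M, ∫ s in T * m / M..T * (m + 1) / M,
          ((T * (m + 1) / M - s) ^ k / k !) • iteratedDeriv k g s := by
  have hstep : ∀ m : ℕ, T * (m + 1) / M - T * m / M = T / M := fun m ↦ by ring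
  simp_rw [← sum_integral_equispaced hg.continuous hM,
    integral_eq_sum_add_integral_iteratedDeriv hg, hstep, sum_add_distrib, smul_sum]
  rw [sum_comm]

theorem periodicTrapezoidalError_eq {g : ℝ → E} {k : ℕ} (hk : 1 ≤ k) (hg : ContDiff ℝ k g)
    (hper : Periodic g T) (hM : M ≠ 0) :
    periodicTrapezoidalError T M g =
      -∑ j ∈ Ico 1 k, ((T / M) ^ j / (j + 1)!) • periodicTrapezoidalError T M (iteratedDeriv j g) -
        ∑ m ∈ range M, ∫ s in T * m / M..T * (m + 1) / M,
          ((T * (m + 1) / M - s) ^ k / k !) • iteratedDeriv k g s := by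
  have hderiv : ∀ j ∈ Ico 1 k, ((T / M) ^ j / (j + 1)!) •
      periodicTrapezoidalError T M (iteratedDeriv j g) =
        ((T / M) ^ (j + 1) / (j + 1)!) • ∑ m ∈ range M, iteratedDeriv j g (T * m / M) := by
    intro j hj
    obtain ⟨i, rfl⟩ : ∃ i, j = i + 1 := ⟨j - 1, by grind⟩
    rw [iteratedDeriv_succ, (hper.iteratedDeriv i).periodicTrapezoidalError_deriv
      ((hg.iteratedDeriv_of_le (by grind)).of_le (by norm_cast; grind)), smul_smul]
    congr 1
    ring
  rw [periodicTrapezoidalError, integral_eq_sum_iteratedDeriv_nodes_add_remainder hg hM,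
    sum_congr rfl hderiv, sum_range_eq_add_Ico _ hk]
  simp only [zero_add, pow_one, factorial_one, cast_one, div_one, iteratedDeriv_zero]
  abel

theorem exists_norm_periodicTrapezoidalError_le {k : ℕ} (hk : 1 ≤ k) :
    ∃ C > 0, ∀ T, 0 ≤ T → ∀ M : ℕ, M ≠ 0 → ∀ g : ℝ → E, ContDiff ℝ k g → Periodic g T →
      ‖periodicTrapezoidalError T M g‖ ≤ C * (T / M) ^ k * ∫ s in 0..T, ‖iteratedDeriv k g s‖ := by
  induction k using Nat.strong_induction_on with
  | _ k ih =>
  choose! C hC_pos hC using fun j (hj : j ∈ Ico 1 k) ↦ ih (k - j) (by grind) (by grind)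
  refine ⟨∑ j ∈ Ico 1 k, C j / (j + 1)! + 1 / k !, ?_, fun T hT M hM g hg hper ↦ ?_⟩
  · have := sum_nonneg fun j hj ↦ div_nonneg (hC_pos j hj).le (cast_nonneg (j + 1)!)
    positivity
  set h := T / M
  set I := ∫ s in 0..T, ‖iteratedDeriv k g s‖
  have hI : 0 ≤ I := integral_nonneg hT fun _ _ ↦ norm_nonneg _
  have hderiv : ∀ j ∈ Ico 1 k,
      ‖(h ^ j / (j + 1)!) • periodicTrapezoidalError T M (iteratedDeriv j g)‖ ≤
        C j / (j + 1)! * h ^ k * I := by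
    intro j hj
    have hjk : j ≤ k := (mem_Ico.mp hj).2.le
    have := hC j hj T hT M hM _ (hg.iteratedDeriv_of_le hjk) (hper.iteratedDeriv j)
    rw [iteratedDeriv_iteratedDeriv, Nat.sub_add_cancel hjk] at this
    rw [norm_smul, Real.norm_of_nonneg (by positivity)]
    calc h ^ j / (j + 1)! * ‖periodicTrapezoidalError T M (iteratedDeriv j g)‖
        ≤ h ^ j / (j + 1)! * (C j * h ^ (k - j) * I) := by gcongr
      _ = C j / (j + 1)! * h ^ k * I := by
        rw [← Nat.sub_add_cancel hjk, pow_add, Nat.add_sub_cancel]; ring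
  rw [periodicTrapezoidalError_eq hk hg hper hM]
  calc _ ≤ ∑ j ∈ Ico 1 k, C j / (j + 1)! * h ^ k * I + h ^ k / k ! * I :=
        (norm_sub_le _ _).trans (add_le_add ((norm_neg _).trans_le
          ((norm_sum_le _ _).trans (sum_le_sum hderiv)))
          (norm_sum_taylor_remainder_le (hg.continuous_iteratedDeriv k le_rfl) hT hM k))
    _ = _ := by rw [← sum_mul, ← sum_mul]; ring

theorem norm_iteratedDeriv_mul_le {𝕜 A : Type*} [NontriviallyNormedField 𝕜] [NormedRing A]
    [NormedAlgebra 𝕜 A] {f g : 𝕜 → A} {n : ℕ} (hf : ContDiff 𝕜 n f) (hg : ContDiff 𝕜 n g)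
    (x : 𝕜) :
    ‖iteratedDeriv n (fun y ↦ f y * g y) x‖ ≤ ∑ i ∈ range (n + 1),
      (n.choose i : ℝ) * ‖iteratedDeriv i f x‖ * ‖iteratedDeriv (n - i) g x‖ := by
  simpa only [norm_iteratedFDeriv_eq_norm_iteratedDeriv] using
    norm_iteratedFDeriv_mul_le hf hg x le_rfl

theorem Continuous.memLp_restrict_Ioc {F : Type*} [NormedAddCommGroup F] {u : ℝ → F}
    (hu : Continuous u) (p : ENNReal) (a b : ℝ) : MemLp u p (volume.restrict (Set.Ioc a b)) := by
  obtain ⟨C, hC⟩ := (isCompact_Icc (a := a) (b := b)).exists_bound_of_continuousOn hu.continuousOn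
  refine MemLp.of_bound hu.aestronglyMeasurable C ?_
  filter_upwards [ae_restrict_mem measurableSet_Ioc] with x hx
  exact hC x (Set.Ioc_subset_Icc_self hx)

theorem integral_norm_mul_norm_le {F G : Type*} [NormedAddCommGroup F] [NormedAddCommGroup G]
    {u : ℝ → F} {w : ℝ → G} (hu : Continuous u) (hw : Continuous w) {a b : ℝ} (hab : a ≤ b) :
    ∫ s in a..b, ‖u s‖ * ‖w s‖ ≤
      (∫ s in a..b, ‖u s‖ ^ 2) ^ (1 / 2 : ℝ) * (∫ s in a..b, ‖w s‖ ^ 2) ^ (1 / 2 : ℝ) := by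
  simp only [integral_of_le hab]
  have := integral_mul_norm_le_Lp_mul_Lq Real.HolderConjugate.two_two
    (hu.norm.memLp_restrict_Ioc _ a b) (hw.norm.memLp_restrict_Ioc _ a b)
  simpa only [norm_norm, rpow_two] using this

theorem Hnorm_nonneg (r : ℕ) (f : ℝ → ℂ) : 0 ≤ Hnorm r f :=
  rpow_nonneg (sum_nonneg fun _ _ ↦ integral_nonneg two_pi_pos.le fun _ _ ↦
    by positivity) _

theorem sqrt_integral_norm_iteratedDeriv_sq_le_Hnorm {r j : ℕ} (hj : j ≤ r) (f : ℝ → ℂ) :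
    (∫ s in 0..2 * π, ‖iteratedDeriv j f s‖ ^ 2) ^ (1 / 2 : ℝ) ≤ Hnorm r f := by
  have hnonneg : ∀ i, 0 ≤ ∫ s in 0..2 * π, ‖iteratedDeriv i f s‖ ^ 2 := fun _ ↦
    integral_nonneg two_pi_pos.le fun _ _ ↦ by positivity
  refine rpow_le_rpow (hnonneg j) ?_ (by norm_num)
  exact single_le_sum (fun i _ ↦ hnonneg i) (mem_range.mpr (by omega))

theorem integral_norm_iteratedDeriv_mul_le_Hnorm {f v : ℝ → ℂ} {r : ℕ} (hf : ContDiff ℝ r f)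
    (hv : ContDiff ℝ r v) :
    ∫ s in 0..2 * π, ‖iteratedDeriv r (fun s ↦ f s * v s) s‖ ≤ 2 ^ r * Hnorm r f * Hnorm r v := by
  have hcont : ∀ {w : ℝ → ℂ}, ContDiff ℝ r w → ∀ i ≤ r, Continuous (iteratedDeriv i w) :=
    fun hw i hi ↦ hw.continuous_iteratedDeriv i (by exact_mod_cast hi)
  have hterm : ∀ i ∈ range (r + 1), Continuous fun s ↦
      (r.choose i : ℝ) * ‖iteratedDeriv i f s‖ * ‖iteratedDeriv (r - i) v s‖ := fun i hi ↦ by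
    have := mem_range.mp hi
    have := (hcont hf i (by omega)).norm
    have := (hcont hv (r - i) (by omega)).norm
    fun_prop
  calc ∫ s in 0..2 * π, ‖iteratedDeriv r (fun s ↦ f s * v s) s‖
      ≤ ∫ s in 0..2 * π, ∑ i ∈ range (r + 1),
          (r.choose i : ℝ) * ‖iteratedDeriv i f s‖ * ‖iteratedDeriv (r - i) v s‖ :=
        integral_mono_on two_pi_pos.le ((hcont (hf.mul hv) r le_rfl).norm.intervalIntegrable _ _)
          ((continuous_finsetSum _ hterm).intervalIntegrable _ _)
          fun s _ ↦ norm_iteratedDeriv_mul_le hf hv s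
    _ = ∑ i ∈ range (r + 1), (r.choose i : ℝ) *
          ∫ s in 0..2 * π, ‖iteratedDeriv i f s‖ * ‖iteratedDeriv (r - i) v s‖ := by
        rw [integral_finsetSum fun i hi ↦ (hterm i hi).intervalIntegrable _ _]
        simp only [mul_assoc, intervalIntegral.integral_const_mul]
    _ ≤ ∑ i ∈ range (r + 1), (r.choose i : ℝ) * (Hnorm r f * Hnorm r v) := by
        refine sum_le_sum fun i hi ↦ ?_
        have := mem_range.mp hi
        gcongr
        refine (integral_norm_mul_norm_le (hcont hf i (by omega)) (hcont hv (r - i) (by omega))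
          two_pi_pos.le).trans ?_
        exact mul_le_mul (sqrt_integral_norm_iteratedDeriv_sq_le_Hnorm (by omega) f)
          (sqrt_integral_norm_iteratedDeriv_sq_le_Hnorm (by omega) v)
          (rpow_nonneg (integral_nonneg two_pi_pos.le fun _ _ ↦ by positivity) _)
          (Hnorm_nonneg r f)
    _ = 2 ^ r * Hnorm r f * Hnorm r v := by
        rw [← sum_mul, ← cast_sum, sum_range_choose]
        push_cast
        ring

/-- Functions on `∂D` are identified with `2π`-periodic functions of arclength, and the `H^{-r}`
norm of the mean-free distribution `f̃_M - f̃` is expressed through its pairing with zero-mean test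
functions `v ∈ H^r`: `⟨f̃_M - f̃, v⟩ = (2π/M) Σ_m f(s_m) v(s_m) - ∫_0^{2π} f v`. -/
theorem point_mass_quadrature_Hminus_r_bound (r : ℕ) (hr : 1 ≤ r) :
    ∃ C > 0, ∀ M : ℕ, 2 ≤ M →
      ∀ f : ℝ → ℂ, ContDiff ℝ r f → (∀ s, f (s + 2 * Real.pi) = f s) →
        (∫ s in (0 : ℝ)..(2 * Real.pi), f s) = 0 →
        (∑ m ∈ Finset.range M, f (2 * Real.pi * m / M)) = 0 →
        ∀ v : ℝ → ℂ, ContDiff ℝ r v → (∀ s, v (s + 2 * Real.pi) = v s) →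
          (∫ s in (0 : ℝ)..(2 * Real.pi), v s) = 0 →
          ‖((2 * Real.pi / M) *
              (∑ m ∈ Finset.range M, f (2 * Real.pi * m / M) * v (2 * Real.pi * m / M))
            - ∫ s in (0 : ℝ)..(2 * Real.pi), f s * v s)‖
          ≤ C * (M : ℝ) ^ (-(r : ℝ)) * Hnorm r f * Hnorm r v := by
  obtain ⟨C, hC_pos, hC⟩ := exists_norm_periodicTrapezoidalError_le (E := ℂ) hr
  refine ⟨C * (2 * π) ^ r * 2 ^ r, by positivity, fun M hM f hf hf_per _ _ v hv hv_per _ ↦ ?_⟩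
  have hM₀ : M ≠ 0 := by omega
  have hpairing : (2 * π / M : ℂ) * ∑ m ∈ range M, f (2 * π * m / M) * v (2 * π * m / M) -
      ∫ s in 0..2 * π, f s * v s = periodicTrapezoidalError (2 * π) M fun s ↦ f s * v s := by
    simp [periodicTrapezoidalError, Complex.real_smul]
  rw [hpairing]
  calc _ ≤ C * (2 * π / M) ^ r * ∫ s in 0..2 * π, ‖iteratedDeriv r (fun s ↦ f s * v s) s‖ :=
        hC _ two_pi_pos.le M hM₀ _ (hf.mul hv) (Periodic.mul hf_per hv_per)
    _ ≤ C * (2 * π / M) ^ r * (2 ^ r * Hnorm r f * Hnorm r v) := by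
        gcongr
        exact integral_norm_iteratedDeriv_mul_le_Hnorm hf hv
    _ = C * (2 * π) ^ r * 2 ^ r * (M : ℝ) ^ (-(r : ℝ)) * Hnorm r f * Hnorm r v := by
        rw [rpow_neg (cast_nonneg M), rpow_natCast, div_pow]
        ring
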